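/- arXiv:1405.5797 — 6 statements merged into one kernel-verified Lean document; each statement's English description precedes it below -/
import Mathlib

section
/- Let u, ψ : ℝ × ℝ → ℝ be smooth functions of (t, x) such that ψ(t,x) ≠ 0 for all (t,x), ψ_{xx} + u·ψ = 0 everywhere (Hill's equation in x for each fixed t), and the flow equation ∂_t(−ψ_{xx}/ψ) = ∂_x(ψ²) holds everywhere. Then at every point (t,x) where u_x(t,x) ≠ 0, the negative KdV equation of Fuchssteiner type holds: ∂_x(u_{txx}/u_x) + 4·∂_x(u·u_t/u_x) + 2·u_t = 0. -/
/-- Partial derivative in the second (space) variable. -/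
noncomputable def pdx (u : ℝ → ℝ → ℝ) : ℝ → ℝ → ℝ :=
  fun t x => deriv (fun y => u t y) x

/-- Partial derivative in the first (time) variable. -/
noncomputable def pdt (u : ℝ → ℝ → ℝ) : ℝ → ℝ → ℝ :=
  fun t x => deriv (fun s => u s x) t

/-- The Fuchssteiner negative KdV equation
`∂_x(u_{txx}/u_x) + 4·∂_x(u·u_t/u_x) + 2·u_t = 0` at the point `(t, x)`. -/
def FuchssteinerEq (u : ℝ → ℝ → ℝ) (t x : ℝ) : Prop :=
  pdx (fun t x => pdx (pdx (pdt u)) t x / pdx u t x) t x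
    + 4 * pdx (fun t x => u t x * pdt u t x / pdx u t x) t x
    + 2 * pdt u t x = 0

theorem diffx (f : ℝ → ℝ → ℝ) (hf : ContDiff ℝ (⊤ : ℕ∞) (Function.uncurry f)) (t x : ℝ) :
    DifferentiableAt ℝ (fun y => f t y) x := by
  have h : (fun y => f t y) = (Function.uncurry f) ∘ (fun y => ((t, y) : ℝ × ℝ)) := rfl
  rw [h]
  exact DifferentiableAt.comp x (hf.differentiable (by simp) (t, x))
    ((differentiableAt_const t).prodMk differentiableAt_id)

theorem pdx_eq_fderiv (f : ℝ → ℝ → ℝ) (hf : ContDiff ℝ (⊤ : ℕ∞) (Function.uncurry f)) (t x : ℝ) :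
    pdx f t x = fderiv ℝ (Function.uncurry f) (t, x) ((0 : ℝ), (1 : ℝ)) := by
  have hg : HasDerivAt (fun y => ((t, y) : ℝ × ℝ)) ((0 : ℝ), (1 : ℝ)) x :=
    (hasDerivAt_const x t).prodMk (hasDerivAt_id x)
  exact ((hf.differentiable (by simp) (t, x)).hasFDerivAt.comp_hasDerivAt x hg).deriv

theorem contDiff_pdx (f : ℝ → ℝ → ℝ) (hf : ContDiff ℝ (⊤ : ℕ∞) (Function.uncurry f)) :
    ContDiff ℝ (⊤ : ℕ∞) (Function.uncurry (pdx f)) := by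
  have h : Function.uncurry (pdx f)
      = fun p : ℝ × ℝ => fderiv ℝ (Function.uncurry f) p ((0 : ℝ), (1 : ℝ)) := by
    funext p
    cases p with
    | mk t x => exact pdx_eq_fderiv f hf t x
  rw [h]
  exact (hf.fderiv_right (by simp)).clm_apply contDiff_const

/-- if `ψ` never vanishes, solves Hill's equation `ψ_{xx} + u·ψ = 0`, and the
flow `∂_t(−ψ_{xx}/ψ) = ∂_x(ψ²)` holds, then wherever `u_x ≠ 0` the Fuchssteiner
negative KdV equation holds. -/
theorem stmt_2 (u ψ : ℝ → ℝ → ℝ)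
    (hu : ContDiff ℝ (⊤ : ℕ∞) (Function.uncurry u)) (hψ : ContDiff ℝ (⊤ : ℕ∞) (Function.uncurry ψ))
    (hne : ∀ t x : ℝ, ψ t x ≠ 0)
    (hHill : ∀ t x : ℝ, pdx (pdx ψ) t x + u t x * ψ t x = 0)
    (hflow : ∀ t x : ℝ,
      pdt (fun t x => -(pdx (pdx ψ) t x) / ψ t x) t x
        = pdx (fun t x => (ψ t x) ^ 2) t x) :
    ∀ t x : ℝ, pdx u t x ≠ 0 → FuchssteinerEq u t x := by
  have hψ1 : ContDiff ℝ (⊤ : ℕ∞) (Function.uncurry (pdx ψ)) := contDiff_pdx ψ hψ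
  have hu1 : ContDiff ℝ (⊤ : ℕ∞) (Function.uncurry (pdx u)) := contDiff_pdx u hu
  have hw : ∀ t x, pdx (pdx ψ) t x = -(u t x * ψ t x) := fun t x => by linarith [hHill t x]
  have hfun : (fun t x => -(pdx (pdx ψ) t x) / ψ t x) = u := by
    funext t x
    rw [hw t x, neg_neg, mul_div_cancel_right₀ _ (hne t x)]
  have hut : ∀ t x, pdt u t x = 2 * ψ t x * pdx ψ t x := by
    intro t x
    have h1 : pdt u t x = pdx (fun t x => (ψ t x) ^ 2) t x := by
      rw [← hfun]; exact hflow t x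
    have hP : HasDerivAt (fun y => ψ t y) (pdx ψ t x) x := (diffx ψ hψ t x).hasDerivAt
    rw [h1, show pdx (fun t x => (ψ t x) ^ 2) t x = deriv (fun y => (ψ t y) ^ 2) x from rfl,
      (hP.fun_pow 2).deriv]
    ring
  have hutx : ∀ t x, pdx (pdt u) t x
      = 2 * (pdx ψ t x) ^ 2 - 2 * u t x * (ψ t x) ^ 2 := by
    intro t x
    have h : pdt u = fun t x => 2 * ψ t x * pdx ψ t x := funext fun t => funext fun x => hut t x
    have hP : HasDerivAt (fun y => ψ t y) (pdx ψ t x) x := (diffx ψ hψ t x).hasDerivAt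
    have hV : HasDerivAt (fun y => pdx ψ t y) (pdx (pdx ψ) t x) x := (diffx _ hψ1 t x).hasDerivAt
    rw [h, show pdx (fun t x => 2 * ψ t x * pdx ψ t x) t x
        = deriv (fun y => 2 * ψ t y * pdx ψ t y) x from rfl,
      ((hP.const_mul 2).fun_mul hV).deriv, hw t x]
    ring
  have hutxx : ∀ t x, pdx (pdx (pdt u)) t x
      = -8 * u t x * ψ t x * pdx ψ t x - 2 * pdx u t x * (ψ t x) ^ 2 := by
    intro t x
    have h : pdx (pdt u) = fun t x => 2 * (pdx ψ t x) ^ 2 - 2 * u t x * (ψ t x) ^ 2 :=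
      funext fun t => funext fun x => hutx t x
    have hP : HasDerivAt (fun y => ψ t y) (pdx ψ t x) x := (diffx ψ hψ t x).hasDerivAt
    have hV : HasDerivAt (fun y => pdx ψ t y) (pdx (pdx ψ) t x) x := (diffx _ hψ1 t x).hasDerivAt
    have hU : HasDerivAt (fun y => u t y) (pdx u t x) x := (diffx u hu t x).hasDerivAt
    have hd := (((hV.fun_pow 2).const_mul 2).fun_sub ((hU.const_mul 2).fun_mul (hP.fun_pow 2)))
    rw [h, show pdx (fun t x => 2 * (pdx ψ t x) ^ 2 - 2 * u t x * (ψ t x) ^ 2) t x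
        = deriv (fun y => 2 * (pdx ψ t y) ^ 2 - 2 * u t y * (ψ t y) ^ 2) x from rfl,
      hd.deriv, hw t x]
    ring
  intro t x hux
  have hP : HasDerivAt (fun y => ψ t y) (pdx ψ t x) x := (diffx ψ hψ t x).hasDerivAt
  have hcont : ContinuousAt (fun y => pdx u t y) x := (diffx _ hu1 t x).continuousAt
  have hev : ∀ᶠ y in nhds x, pdx u t y ≠ 0 := hcont.eventually_ne hux
  set c : ℝ → ℝ := fun y => -8 * u t y * ψ t y * pdx ψ t y / pdx u t y with hcdef
  have hc_diff : DifferentiableAt ℝ c x :=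
    ((((diffx u hu t x).const_mul (-8)).mul (diffx ψ hψ t x)).mul (diffx _ hψ1 t x)).div
      (diffx _ hu1 t x) hux
  have h1 : deriv (fun y => pdx (pdx (pdt u)) t y / pdx u t y) x
      = deriv c x - 4 * ψ t x * pdx ψ t x := by
    have heq : (fun y => pdx (pdx (pdt u)) t y / pdx u t y)
        =ᶠ[nhds x] fun y => c y - 2 * (ψ t y) ^ 2 := by
      filter_upwards [hev] with y hy
      rw [hutxx t y, hcdef]
      field_simp
    have hd2 : HasDerivAt (fun y => 2 * (ψ t y) ^ 2)
        (2 * (((2 : ℕ) : ℝ) * ψ t x ^ (2 - 1) * pdx ψ t x)) x := (hP.pow 2).const_mul 2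
    rw [heq.deriv_eq, deriv_fun_sub hc_diff hd2.differentiableAt, hd2.deriv]
    ring
  have h2 : deriv (fun y => u t y * pdt u t y / pdx u t y) x = -(deriv c x) / 4 := by
    have heq : (fun y => u t y * pdt u t y / pdx u t y) = fun y => -(c y) / 4 := by
      funext y
      rw [hut t y, hcdef]
      ring
    rw [heq]
    rw [deriv_div_const, deriv.fun_neg]
  show pdx (fun t x => pdx (pdx (pdt u)) t x / pdx u t x) t x
    + 4 * pdx (fun t x => u t x * pdt u t x / pdx u t x) t x + 2 * pdt u t x = 0
  rw [show pdx (fun t x => pdx (pdx (pdt u)) t x / pdx u t x) t x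
      = deriv (fun y => pdx (pdx (pdt u)) t y / pdx u t y) x from rfl,
    show pdx (fun t x => u t x * pdt u t x / pdx u t x) t x
      = deriv (fun y => u t y * pdt u t y / pdx u t y) x from rfl,
    h1, h2, hut t x]
  ring
end

section
/- Let u, ψ₁, ψ₂ : ℝ → ℝ be smooth with ψ₁'' + u·ψ₁ = 0 and ψ₂'' + u·ψ₂ = 0 on ℝ. Then for every i ∈ {0, 1, 2, 3}, the cubic monomial f = ψ₁^i · ψ₂^{3−i} satisfies the fourth-order equation f'''' + 10·u·f'' + 10·u'·f' + (9·u² + 3·u'')·f = 0 on ℝ. -/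
lemma id2 (f : ℝ → ℝ) : iteratedDeriv 2 f = deriv (deriv f) := by
  rw [show (2:ℕ) = 1+1 from rfl, iteratedDeriv_succ, iteratedDeriv_one]

lemma id4 (f : ℝ → ℝ) : iteratedDeriv 4 f = deriv (deriv (deriv (deriv f))) := by
  rw [show (4:ℕ) = 1+1+1+1 from rfl, iteratedDeriv_succ, iteratedDeriv_succ,
    iteratedDeriv_succ, iteratedDeriv_one]

lemma key (u p q r : ℝ → ℝ) (hu : ContDiff ℝ (⊤ : ℕ∞) u) (hp : ContDiff ℝ (⊤ : ℕ∞) p)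
    (hq : ContDiff ℝ (⊤ : ℕ∞) q) (hr : ContDiff ℝ (⊤ : ℕ∞) r)
    (hp2 : ∀ x, deriv (deriv p) x = -(u x * p x))
    (hq2 : ∀ x, deriv (deriv q) x = -(u x * q x))
    (hr2 : ∀ x, deriv (deriv r) x = -(u x * r x)) (x : ℝ) :
    deriv (deriv (deriv (deriv (fun y => p y * q y * r y)))) x
      + 10 * u x * deriv (deriv (fun y => p y * q y * r y)) x
      + 10 * deriv u x * deriv (fun y => p y * q y * r y) x
      + (9 * (u x) ^ 2 + 3 * deriv (deriv u) x) * (p x * q x * r x) = 0 := by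
  have hdp := hp.differentiable (by simp)
  have hdq := hq.differentiable (by simp)
  have hdr := hr.differentiable (by simp)
  have hdu := hu.differentiable (by simp)
  have hdP := ((contDiff_infty_iff_deriv.mp (hp.of_le (by simp))).2).differentiable (by simp)
  have hdQ := ((contDiff_infty_iff_deriv.mp (hq.of_le (by simp))).2).differentiable (by simp)
  have hdR := ((contDiff_infty_iff_deriv.mp (hr.of_le (by simp))).2).differentiable (by simp)
  have hdU := ((contDiff_infty_iff_deriv.mp (hu.of_le (by simp))).2).differentiable (by simp)
  have E1 : deriv (fun y => p y * q y * r y)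
      = fun y => (deriv p y * q y + p y * deriv q y) * r y + p y * q y * deriv r y := by
    funext y
    exact (((hdp y).hasDerivAt.mul (hdq y).hasDerivAt).mul (hdr y).hasDerivAt).deriv
  have E2 : deriv (fun y => (deriv p y * q y + p y * deriv q y) * r y + p y * q y * deriv r y)
      = fun y => -(3 * (u y * (p y * q y * r y)))
          + 2 * (deriv p y * deriv q y * r y
              + (deriv p y * q y * deriv r y + p y * deriv q y * deriv r y)) := by
    funext y
    have h := ((((hdP y).hasDerivAt.mul (hdq y).hasDerivAt).add
        ((hdp y).hasDerivAt.mul (hdQ y).hasDerivAt)).mul (hdr y).hasDerivAt).add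
        (((hdp y).hasDerivAt.mul (hdq y).hasDerivAt).mul (hdR y).hasDerivAt)
    erw [h.deriv]; simp only [Pi.mul_apply, Pi.add_apply]; rw [hp2, hq2, hr2]; ring
  have E3 : deriv (fun y => -(3 * (u y * (p y * q y * r y)))
          + 2 * (deriv p y * deriv q y * r y
              + (deriv p y * q y * deriv r y + p y * deriv q y * deriv r y)))
      = fun y => -(3 * (deriv u y * (p y * q y * r y)))
          + (-(7 * (u y * ((deriv p y * q y + p y * deriv q y) * r y + p y * q y * deriv r y)))
            + 6 * (deriv p y * deriv q y * deriv r y)) := by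
    funext y
    have hA := (((hdu y).hasDerivAt.mul
        (((hdp y).hasDerivAt.mul (hdq y).hasDerivAt).mul (hdr y).hasDerivAt)).const_mul
        (3:ℝ)).neg
    have hB := ((((hdP y).hasDerivAt.mul (hdQ y).hasDerivAt).mul (hdr y).hasDerivAt).add
        ((((hdP y).hasDerivAt.mul (hdq y).hasDerivAt).mul (hdR y).hasDerivAt).add
        (((hdp y).hasDerivAt.mul (hdQ y).hasDerivAt).mul (hdR y).hasDerivAt))).const_mul (2:ℝ)
    have h := hA.add hB
    erw [h.deriv]; simp only [Pi.mul_apply, Pi.add_apply]; rw [hp2, hq2, hr2]; ring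
  have hA := (((hdU x).hasDerivAt.mul
      (((hdp x).hasDerivAt.mul (hdq x).hasDerivAt).mul (hdr x).hasDerivAt)).const_mul
      (3:ℝ)).neg
  have hB := ((((hdu x).hasDerivAt.mul
      (((((hdP x).hasDerivAt.mul (hdq x).hasDerivAt).add
        ((hdp x).hasDerivAt.mul (hdQ x).hasDerivAt)).mul (hdr x).hasDerivAt).add
        (((hdp x).hasDerivAt.mul (hdq x).hasDerivAt).mul (hdR x).hasDerivAt)))).const_mul
      (7:ℝ)).neg
  have hC := ((((hdP x).hasDerivAt.mul (hdQ x).hasDerivAt).mul (hdR x).hasDerivAt).const_mul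
      (6:ℝ))
  have h4 := hA.add (hB.add hC)
  rw [E1, E2, E3]; erw [h4.deriv]; simp only [Pi.mul_apply, Pi.add_apply]; rw [hp2, hq2, hr2]
  ring

/-- if smooth `ψ₁, ψ₂` solve Hill's equation `ψ'' + u·ψ = 0`, then for each
`i ∈ {0,1,2,3}` the cubic monomial `f = ψ₁^i · ψ₂^(3−i)` solves the fourth-order equation
`f'''' + 10·u·f'' + 10·u'·f' + (9·u² + 3·u'')·f = 0`. -/
theorem stmt_3 (u ψ₁ ψ₂ : ℝ → ℝ) (hu : ContDiff ℝ (⊤ : ℕ∞) u)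
    (hψ₁ : ContDiff ℝ (⊤ : ℕ∞) ψ₁) (hψ₂ : ContDiff ℝ (⊤ : ℕ∞) ψ₂)
    (h₁ : ∀ x : ℝ, iteratedDeriv 2 ψ₁ x + u x * ψ₁ x = 0)
    (h₂ : ∀ x : ℝ, iteratedDeriv 2 ψ₂ x + u x * ψ₂ x = 0) :
    ∀ i : ℕ, i ≤ 3 → ∀ x : ℝ,
      iteratedDeriv 4 (fun y => ψ₁ y ^ i * ψ₂ y ^ (3 - i)) x
        + 10 * u x * iteratedDeriv 2 (fun y => ψ₁ y ^ i * ψ₂ y ^ (3 - i)) x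
        + 10 * deriv u x * deriv (fun y => ψ₁ y ^ i * ψ₂ y ^ (3 - i)) x
        + (9 * (u x) ^ 2 + 3 * iteratedDeriv 2 u x) * (ψ₁ x ^ i * ψ₂ x ^ (3 - i)) = 0 := by
  have h₁' : ∀ x, deriv (deriv ψ₁) x = -(u x * ψ₁ x) := by
    intro x; have := h₁ x; rw [id2] at this; linarith
  have h₂' : ∀ x, deriv (deriv ψ₂) x = -(u x * ψ₂ x) := by
    intro x; have := h₂ x; rw [id2] at this; linarith
  intro i hi x
  interval_cases i
  · have hf : (fun y => ψ₁ y ^ 0 * ψ₂ y ^ (3 - 0)) = fun y => ψ₂ y * ψ₂ y * ψ₂ y := by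
      funext y; show ψ₁ y ^ 0 * ψ₂ y ^ 3 = _; ring
    have hx : ψ₁ x ^ 0 * ψ₂ x ^ (3 - 0) = ψ₂ x * ψ₂ x * ψ₂ x := by show ψ₁ x ^ 0 * ψ₂ x ^ 3 = _; ring
    rw [id4, id2, id2, hf, hx]
    exact key u ψ₂ ψ₂ ψ₂ hu hψ₂ hψ₂ hψ₂ h₂' h₂' h₂' x
  · have hf : (fun y => ψ₁ y ^ 1 * ψ₂ y ^ (3 - 1)) = fun y => ψ₁ y * ψ₂ y * ψ₂ y := by
      funext y; show ψ₁ y ^ 1 * ψ₂ y ^ 2 = _; ring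
    have hx : ψ₁ x ^ 1 * ψ₂ x ^ (3 - 1) = ψ₁ x * ψ₂ x * ψ₂ x := by show ψ₁ x ^ 1 * ψ₂ x ^ 2 = _; ring
    rw [id4, id2, id2, hf, hx]
    exact key u ψ₁ ψ₂ ψ₂ hu hψ₁ hψ₂ hψ₂ h₁' h₂' h₂' x
  · have hf : (fun y => ψ₁ y ^ 2 * ψ₂ y ^ (3 - 2)) = fun y => ψ₁ y * ψ₁ y * ψ₂ y := by
      funext y; show ψ₁ y ^ 2 * ψ₂ y ^ 1 = _; ring
    have hx : ψ₁ x ^ 2 * ψ₂ x ^ (3 - 2) = ψ₁ x * ψ₁ x * ψ₂ x := by show ψ₁ x ^ 2 * ψ₂ x ^ 1 = _; ring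
    rw [id4, id2, id2, hf, hx]
    exact key u ψ₁ ψ₁ ψ₂ hu hψ₁ hψ₁ hψ₂ h₁' h₁' h₂' x
  · have hf : (fun y => ψ₁ y ^ 3 * ψ₂ y ^ (3 - 3)) = fun y => ψ₁ y * ψ₁ y * ψ₁ y := by
      funext y; show ψ₁ y ^ 3 * ψ₂ y ^ 0 = _; ring
    have hx : ψ₁ x ^ 3 * ψ₂ x ^ (3 - 3) = ψ₁ x * ψ₁ x * ψ₁ x := by show ψ₁ x ^ 3 * ψ₂ x ^ 0 = _; ring
    rw [id4, id2, id2, hf, hx]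
    exact key u ψ₁ ψ₁ ψ₁ hu hψ₁ hψ₁ hψ₁ h₁' h₁' h₁' x
end

section
/- Let u, ψ : ℝ × ℝ → ℝ be smooth functions of (t, x) such that ψ(t,x) ≠ 0 for all (t,x), ψ_{xx} + u·ψ = 0 everywhere, and the flow equation ∂_t(−ψ_{xx}/ψ) = ∂_x(ψ³) holds everywhere. Then at every point (t,x) where 3·u² + u_{xx} ≠ 0, the higher-order negative KdV equation ∂_x( u_{txxx}/(3·u² + u_{xx}) ) + 10·∂_x( ∂_x(u·u_t)/(3·u² + u_{xx}) ) + 3·u_t = 0 holds. -/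
lemma key_pdx {f : ℝ → ℝ → ℝ} (hf : ContDiff ℝ (⊤ : ℕ∞) (Function.uncurry f)) (t x : ℝ) :
    HasDerivAt (fun y => f t y) (fderiv ℝ (Function.uncurry f) (t, x) (0, 1)) x := by
  have h1 : HasFDerivAt (Function.uncurry f) (fderiv ℝ (Function.uncurry f) (t, x)) (t, x) :=
    (hf.differentiable (by simp) (t, x)).hasFDerivAt
  have h2 : HasDerivAt (fun y : ℝ => ((t, y) : ℝ × ℝ)) (0, 1) x :=
    (hasDerivAt_const x t).prodMk (hasDerivAt_id x)
  exact h1.comp_hasDerivAt x h2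

lemma hasDerivAt_pdx {f : ℝ → ℝ → ℝ} (hf : ContDiff ℝ (⊤ : ℕ∞) (Function.uncurry f)) (t x : ℝ) :
    HasDerivAt (fun y => f t y) (pdx f t x) x := by
  have h := key_pdx hf t x
  have he : pdx f t x = fderiv ℝ (Function.uncurry f) (t, x) (0, 1) := h.deriv
  rw [he]; exact h

lemma smooth_pdx {f : ℝ → ℝ → ℝ} (hf : ContDiff ℝ (⊤ : ℕ∞) (Function.uncurry f)) :
    ContDiff ℝ (⊤ : ℕ∞) (Function.uncurry (pdx f)) := by
  have heq : (Function.uncurry (pdx f))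
      = fun p : ℝ × ℝ => fderiv ℝ (Function.uncurry f) p (0, 1) := by
    funext p
    exact (key_pdx hf p.1 p.2).deriv
  rw [heq]
  exact (hf.fderiv_right (by simp)).clm_apply contDiff_const

/-- if `ψ` never vanishes, solves Hill's equation `ψ_{xx} + u·ψ = 0`, and the
flow `∂_t(−ψ_{xx}/ψ) = ∂_x(ψ³)` holds, then wherever `3·u² + u_{xx} ≠ 0` the higher-order
negative KdV equation
`∂_x(u_{txxx}/(3u² + u_{xx})) + 10·∂_x(∂_x(u·u_t)/(3u² + u_{xx})) + 3·u_t = 0` holds. -/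
theorem stmt_5 (u ψ : ℝ → ℝ → ℝ)
    (hu : ContDiff ℝ (⊤ : ℕ∞) (Function.uncurry u)) (hψ : ContDiff ℝ (⊤ : ℕ∞) (Function.uncurry ψ))
    (hne : ∀ t x : ℝ, ψ t x ≠ 0)
    (hHill : ∀ t x : ℝ, pdx (pdx ψ) t x + u t x * ψ t x = 0)
    (hflow : ∀ t x : ℝ,
      pdt (fun t x => -(pdx (pdx ψ) t x) / ψ t x) t x
        = pdx (fun t x => (ψ t x) ^ 3) t x) :
    ∀ t x : ℝ, 3 * (u t x) ^ 2 + pdx (pdx u) t x ≠ 0 →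
      pdx (fun t x =>
          pdx (pdx (pdx (pdt u))) t x / (3 * (u t x) ^ 2 + pdx (pdx u) t x)) t x
        + 10 * pdx (fun t x =>
            pdx (fun t x => u t x * pdt u t x) t x
              / (3 * (u t x) ^ 2 + pdx (pdx u) t x)) t x
        + 3 * pdt u t x = 0 := by
  have hψ1 := smooth_pdx hψ
  have hu1 := smooth_pdx hu
  have hu2 := smooth_pdx hu1
  have hdψ := hasDerivAt_pdx hψ
  have hdP := hasDerivAt_pdx hψ1
  have hdu := hasDerivAt_pdx hu
  have hdU1 := hasDerivAt_pdx hu1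
  have hdU2 := hasDerivAt_pdx hu2
  have hPx : ∀ t x : ℝ, pdx (pdx ψ) t x = -(u t x * ψ t x) := fun t x => by
    linarith [hHill t x]
  have hdP' : ∀ t x : ℝ, HasDerivAt (fun y => pdx ψ t y) (-(u t x * ψ t x)) x := fun t x => by
    rw [← hPx t x]; exact hdP t x
  -- Step 1: u_t = 3 ψ² ψ_x
  have e2 : pdt u = fun t x => 3 * ψ t x ^ 2 * pdx ψ t x := by
    have heq : (fun t x => -(pdx (pdx ψ) t x) / ψ t x) = u := by
      funext s y
      rw [hPx s y, neg_neg, mul_div_assoc, div_self (hne s y), mul_one]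
    funext t x
    have h2 := hflow t x
    rw [heq] at h2
    rw [h2]
    exact ((hdψ t x).pow 3).deriv.trans (by push_cast; ring)
  -- Step 2: u_tx
  have e3 : pdx (pdt u) = fun t x =>
      6 * ψ t x * pdx ψ t x ^ 2 - 3 * u t x * ψ t x ^ 3 := by
    funext t x
    show deriv (fun y => pdt u t y) x = _
    rw [show (fun y => pdt u t y) = fun y => 3 * ψ t y ^ 2 * pdx ψ t y from by rw [e2]]
    exact ((((hdψ t x).pow 2).const_mul (3:ℝ)).mul (hdP' t x)).deriv.trans (by simp only [Pi.pow_apply, Pi.mul_apply]; push_cast; ring)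
  -- Step 3: u_txx
  have e4 : pdx (pdx (pdt u)) = fun t x =>
      6 * pdx ψ t x ^ 3 - 21 * u t x * ψ t x ^ 2 * pdx ψ t x - 3 * pdx u t x * ψ t x ^ 3 := by
    funext t x
    show deriv (fun y => pdx (pdt u) t y) x = _
    rw [show (fun y => pdx (pdt u) t y)
        = fun y => 6 * ψ t y * pdx ψ t y ^ 2 - 3 * u t y * ψ t y ^ 3 from by rw [e3]]
    exact ((((hdψ t x).const_mul (6:ℝ)).mul ((hdP' t x).pow 2)).sub
      (((hdu t x).const_mul (3:ℝ)).mul ((hdψ t x).pow 3))).deriv.trans (by simp only [Pi.pow_apply, Pi.mul_apply]; push_cast; ring)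
  -- Step 4: u_txxx
  have e5 : pdx (pdx (pdx (pdt u))) = fun t x =>
      21 * u t x ^ 2 * ψ t x ^ 3 - 60 * u t x * ψ t x * pdx ψ t x ^ 2
        - 30 * pdx u t x * ψ t x ^ 2 * pdx ψ t x - 3 * pdx (pdx u) t x * ψ t x ^ 3 := by
    funext t x
    show deriv (fun y => pdx (pdx (pdt u)) t y) x = _
    rw [show (fun y => pdx (pdx (pdt u)) t y)
        = fun y => 6 * pdx ψ t y ^ 3 - 21 * u t y * ψ t y ^ 2 * pdx ψ t y
            - 3 * pdx u t y * ψ t y ^ 3 from by rw [e4]]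
    exact (((((hdP' t x).pow 3).const_mul (6:ℝ)).sub
        ((((hdu t x).const_mul (21:ℝ)).mul ((hdψ t x).pow 2)).mul (hdP' t x))).sub
        (((hdU1 t x).const_mul (3:ℝ)).mul ((hdψ t x).pow 3))).deriv.trans (by simp only [Pi.pow_apply, Pi.mul_apply]; push_cast; ring)
  -- Step 5: (u u_t)_x
  have e6 : pdx (fun t x => u t x * pdt u t x) = fun t x =>
      3 * pdx u t x * ψ t x ^ 2 * pdx ψ t x + 6 * u t x * ψ t x * pdx ψ t x ^ 2
        - 3 * u t x ^ 2 * ψ t x ^ 3 := by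
    funext t x
    show deriv (fun y => u t y * pdt u t y) x = _
    rw [show (fun y => u t y * pdt u t y)
        = fun y => u t y * (3 * ψ t y ^ 2 * pdx ψ t y) from by rw [e2]]
    exact ((hdu t x).mul ((((hdψ t x).pow 2).const_mul (3:ℝ)).mul (hdP' t x))).deriv.trans
      (by simp only [Pi.pow_apply, Pi.mul_apply]; push_cast; ring)
  -- Final computation
  intro t x hD
  show deriv (fun y => pdx (pdx (pdx (pdt u))) t y / (3 * u t y ^ 2 + pdx (pdx u) t y)) x
    + 10 * deriv (fun y => pdx (fun t x => u t x * pdt u t x) t y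
        / (3 * u t y ^ 2 + pdx (pdx u) t y)) x
    + 3 * pdt u t x = 0
  rw [show (fun y => pdx (pdx (pdx (pdt u))) t y / (3 * u t y ^ 2 + pdx (pdx u) t y))
      = fun y => (21 * u t y ^ 2 * ψ t y ^ 3 - 60 * u t y * ψ t y * pdx ψ t y ^ 2
          - 30 * pdx u t y * ψ t y ^ 2 * pdx ψ t y - 3 * pdx (pdx u) t y * ψ t y ^ 3)
          / (3 * u t y ^ 2 + pdx (pdx u) t y) from by rw [e5]]
  rw [show (fun y => pdx (fun t x => u t x * pdt u t x) t y / (3 * u t y ^ 2 + pdx (pdx u) t y))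
      = fun y => (3 * pdx u t y * ψ t y ^ 2 * pdx ψ t y + 6 * u t y * ψ t y * pdx ψ t y ^ 2
          - 3 * u t y ^ 2 * ψ t y ^ 3) / (3 * u t y ^ 2 + pdx (pdx u) t y) from by rw [e6]]
  simp only [e2]
  have hDcomb : HasDerivAt (fun y => 3 * u t y ^ 2 + pdx (pdx u) t y)
      (3 * (2 * u t x ^ 1 * pdx u t x) + pdx (pdx (pdx u)) t x) x := by
    have := (((hdu t x).pow 2).const_mul (3:ℝ)).add (hdU2 t x)
    exact this.congr_deriv (by norm_num)
  have hE1 := ((((hdu t x).pow 2).const_mul (21:ℝ)).mul ((hdψ t x).pow 3)).sub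
      ((((hdu t x).const_mul (60:ℝ)).mul (hdψ t x)).mul ((hdP' t x).pow 2)) |>.sub
      (((((hdU1 t x).const_mul (30:ℝ)).mul ((hdψ t x).pow 2)).mul (hdP' t x))) |>.sub
      (((hdU2 t x).const_mul (3:ℝ)).mul ((hdψ t x).pow 3))
  have hE2 := (((((hdU1 t x).const_mul (3:ℝ)).mul ((hdψ t x).pow 2)).mul (hdP' t x)).add
      ((((hdu t x).const_mul (6:ℝ)).mul (hdψ t x)).mul ((hdP' t x).pow 2))) |>.sub
      ((((hdu t x).pow 2).const_mul (3:ℝ)).mul ((hdψ t x).pow 3))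
  have hval1 := HasDerivAt.deriv
    (f := fun y => (21 * u t y ^ 2 * ψ t y ^ 3 - 60 * u t y * ψ t y * pdx ψ t y ^ 2
          - 30 * pdx u t y * ψ t y ^ 2 * pdx ψ t y - 3 * pdx (pdx u) t y * ψ t y ^ 3)
          / (3 * u t y ^ 2 + pdx (pdx u) t y)) (hE1.div hDcomb hD)
  have hval2 := HasDerivAt.deriv
    (f := fun y => (3 * pdx u t y * ψ t y ^ 2 * pdx ψ t y + 6 * u t y * ψ t y * pdx ψ t y ^ 2
          - 3 * u t y ^ 2 * ψ t y ^ 3) / (3 * u t y ^ 2 + pdx (pdx u) t y))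
    (hE2.div hDcomb hD)
  rw [hval1, hval2]
  simp only [Pi.pow_apply, Pi.mul_apply, Pi.sub_apply, Pi.add_apply]
  push_cast
  have hD' : u t x ^ 2 * 3 + pdx (pdx u) t x ≠ 0 := by rwa [mul_comm]
  field_simp
  ring
end

section
/- Let u, ψ : ℝ × ℝ → ℝ be smooth functions of (t, x) such that ψ(t,x) ≠ 0 for all (t,x), ψ_{xx} + u·ψ = 0 everywhere, and the flow equation ∂_t(−ψ_{xx}/ψ) = ∂_x(ψ⁴) holds everywhere. Then at every point (t,x) where u_{xxx} + 16·u·u_x ≠ 0, the higher-order negative KdV equation ∂_x( (u_{txxxx} + 20·u·u_{txx} + 30·u_x·u_{tx} + 18·u_{xx}·u_t + 64·u²·u_t)/(u_{xxx} + 16·u·u_x) ) + 4·u_t = 0 holds. -/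
open scoped ContDiff


lemma keylem (f g : ℝ → ℝ) (hf : ContDiff ℝ ∞ f) (hg : ContDiff ℝ ∞ g)
    (hHill : ∀ x, deriv (deriv f) x = -(g x * f x)) (x : ℝ) :
    deriv (deriv (deriv (deriv (deriv (fun y => f y ^ 4))))) x
      + 20 * g x * deriv (deriv (deriv (fun y => f y ^ 4))) x
      + 30 * deriv g x * deriv (deriv (fun y => f y ^ 4)) x
      + 18 * deriv (deriv g) x * deriv (fun y => f y ^ 4) x
      + 64 * g x ^ 2 * deriv (fun y => f y ^ 4) x
      = -4 * f x ^ 4 * (deriv (deriv (deriv g)) x + 16 * g x * deriv g x) := by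
  have df : Differentiable ℝ f := hf.differentiable (by norm_num)
  have dg : Differentiable ℝ g := hg.differentiable (by norm_num)
  have hg1 : ContDiff ℝ ∞ (deriv g) := (contDiff_infty_iff_deriv.mp hg).2
  have hg2 : ContDiff ℝ ∞ (deriv (deriv g)) := (contDiff_infty_iff_deriv.mp hg1).2
  have dF : Differentiable ℝ (deriv f) := ((contDiff_infty_iff_deriv.mp hf).2).differentiable (by norm_num)
  have dG1 : Differentiable ℝ (deriv g) := hg1.differentiable (by norm_num)
  have dG2 : Differentiable ℝ (deriv (deriv g)) := hg2.differentiable (by norm_num)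
  have atoms : ∀ y : ℝ,
      HasDerivAt f (deriv f y) y ∧ HasDerivAt (deriv f) (-(g y * f y)) y ∧
      HasDerivAt g (deriv g y) y ∧ HasDerivAt (deriv g) (deriv (deriv g) y) y ∧
      HasDerivAt (deriv (deriv g)) (deriv (deriv (deriv g)) y) y := by
    intro y
    refine ⟨(df y).hasDerivAt, ?_, (dg y).hasDerivAt, (dG1 y).hasDerivAt, (dG2 y).hasDerivAt⟩
    have := (dF y).hasDerivAt
    rwa [hHill y] at this
  have e1 : deriv (fun y => f y ^ 4) = fun y => 4 * f y ^ 3 * deriv f y := by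
    funext y
    obtain ⟨Hf, HF, Hg, HG1, HG2⟩ := atoms y
    have H : HasDerivAt (fun y => f y ^ 4) (4 * f y ^ 3 * deriv f y) y := by
      have := Hf.pow 4
      exact this.congr_deriv (by push_cast [Pi.pow_apply, Pi.mul_apply]; ring)
    exact H.deriv
  have e2 : deriv (fun y => 4 * f y ^ 3 * deriv f y)
      = fun y => 12 * f y ^ 2 * deriv f y ^ 2 - 4 * g y * f y ^ 4 := by
    funext y
    obtain ⟨Hf, HF, Hg, HG1, HG2⟩ := atoms y
    have H : HasDerivAt (fun y => 4 * f y ^ 3 * deriv f y)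
        (12 * f y ^ 2 * deriv f y ^ 2 - 4 * g y * f y ^ 4) y := by
      have := ((Hf.pow 3).const_mul (4:ℝ)).mul HF
      exact this.congr_deriv (by push_cast [Pi.pow_apply, Pi.mul_apply]; ring)
    exact H.deriv
  have e3 : deriv (fun y => 12 * f y ^ 2 * deriv f y ^ 2 - 4 * g y * f y ^ 4)
      = fun y => 24 * f y * deriv f y ^ 3 - 40 * g y * f y ^ 3 * deriv f y
          - 4 * deriv g y * f y ^ 4 := by
    funext y
    obtain ⟨Hf, HF, Hg, HG1, HG2⟩ := atoms y
    have H : HasDerivAt (fun y => 12 * f y ^ 2 * deriv f y ^ 2 - 4 * g y * f y ^ 4)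
        (24 * f y * deriv f y ^ 3 - 40 * g y * f y ^ 3 * deriv f y
          - 4 * deriv g y * f y ^ 4) y := by
      have := (((Hf.pow 2).const_mul (12:ℝ)).mul (HF.pow 2)).sub
        ((Hg.const_mul (4:ℝ)).mul (Hf.pow 4))
      exact this.congr_deriv (by push_cast [Pi.pow_apply, Pi.mul_apply]; ring)
    exact H.deriv
  have e4 : deriv (fun y => 24 * f y * deriv f y ^ 3 - 40 * g y * f y ^ 3 * deriv f y
          - 4 * deriv g y * f y ^ 4)
      = fun y => 24 * deriv f y ^ 4 - 192 * g y * f y ^ 2 * deriv f y ^ 2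
          + 40 * g y ^ 2 * f y ^ 4 - 56 * deriv g y * f y ^ 3 * deriv f y
          - 4 * deriv (deriv g) y * f y ^ 4 := by
    funext y
    obtain ⟨Hf, HF, Hg, HG1, HG2⟩ := atoms y
    have H : HasDerivAt (fun y => 24 * f y * deriv f y ^ 3 - 40 * g y * f y ^ 3 * deriv f y
          - 4 * deriv g y * f y ^ 4)
        (24 * deriv f y ^ 4 - 192 * g y * f y ^ 2 * deriv f y ^ 2
          + 40 * g y ^ 2 * f y ^ 4 - 56 * deriv g y * f y ^ 3 * deriv f y
          - 4 * deriv (deriv g) y * f y ^ 4) y := by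
      have := (((Hf.const_mul (24:ℝ)).mul (HF.pow 3)).sub
          (((Hg.const_mul (40:ℝ)).mul (Hf.pow 3)).mul HF)).sub
        ((HG1.const_mul (4:ℝ)).mul (Hf.pow 4))
      exact this.congr_deriv (by push_cast [Pi.pow_apply, Pi.mul_apply]; ring)
    exact H.deriv
  have e5 : deriv (fun y => 24 * deriv f y ^ 4 - 192 * g y * f y ^ 2 * deriv f y ^ 2
          + 40 * g y ^ 2 * f y ^ 4 - 56 * deriv g y * f y ^ 3 * deriv f y
          - 4 * deriv (deriv g) y * f y ^ 4)
      = fun y => -480 * g y * f y * deriv f y ^ 3 + 544 * g y ^ 2 * f y ^ 3 * deriv f y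
          - 360 * deriv g y * f y ^ 2 * deriv f y ^ 2 + 136 * g y * deriv g y * f y ^ 4
          - 72 * deriv (deriv g) y * f y ^ 3 * deriv f y
          - 4 * deriv (deriv (deriv g)) y * f y ^ 4 := by
    funext y
    obtain ⟨Hf, HF, Hg, HG1, HG2⟩ := atoms y
    have H : HasDerivAt (fun y => 24 * deriv f y ^ 4 - 192 * g y * f y ^ 2 * deriv f y ^ 2
          + 40 * g y ^ 2 * f y ^ 4 - 56 * deriv g y * f y ^ 3 * deriv f y
          - 4 * deriv (deriv g) y * f y ^ 4)
        (-480 * g y * f y * deriv f y ^ 3 + 544 * g y ^ 2 * f y ^ 3 * deriv f y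
          - 360 * deriv g y * f y ^ 2 * deriv f y ^ 2 + 136 * g y * deriv g y * f y ^ 4
          - 72 * deriv (deriv g) y * f y ^ 3 * deriv f y
          - 4 * deriv (deriv (deriv g)) y * f y ^ 4) y := by
      have := (((((HF.pow 4).const_mul (24:ℝ)).sub
            (((Hg.const_mul (192:ℝ)).mul (Hf.pow 2)).mul (HF.pow 2))).add
          (((Hg.pow 2).const_mul (40:ℝ)).mul (Hf.pow 4))).sub
          (((HG1.const_mul (56:ℝ)).mul (Hf.pow 3)).mul HF)).sub
        ((HG2.const_mul (4:ℝ)).mul (Hf.pow 4))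
      exact this.congr_deriv (by push_cast [Pi.pow_apply, Pi.mul_apply]; ring)
    exact H.deriv
  rw [e1, e2, e3, e4, e5]
  ring

/-- if `ψ` never vanishes, solves Hill's equation `ψ_{xx} + u·ψ = 0`, and the
flow `∂_t(−ψ_{xx}/ψ) = ∂_x(ψ⁴)` holds, then wherever `u_{xxx} + 16·u·u_x ≠ 0` the
higher-order negative KdV equation
`∂_x((u_{txxxx} + 20·u·u_{txx} + 30·u_x·u_{tx} + 18·u_{xx}·u_t + 64·u²·u_t)/(u_{xxx} + 16·u·u_x)) + 4·u_t = 0`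
holds. -/
theorem stmt_6 (u ψ : ℝ → ℝ → ℝ)
    (hu : ContDiff ℝ (⊤ : ℕ∞) (Function.uncurry u)) (hψ : ContDiff ℝ (⊤ : ℕ∞) (Function.uncurry ψ))
    (hne : ∀ t x : ℝ, ψ t x ≠ 0)
    (hHill : ∀ t x : ℝ, pdx (pdx ψ) t x + u t x * ψ t x = 0)
    (hflow : ∀ t x : ℝ,
      pdt (fun t x => -(pdx (pdx ψ) t x) / ψ t x) t x
        = pdx (fun t x => (ψ t x) ^ 4) t x) :
    ∀ t x : ℝ, pdx (pdx (pdx u)) t x + 16 * u t x * pdx u t x ≠ 0 →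
      pdx (fun t x =>
          (pdx (pdx (pdx (pdx (pdt u)))) t x
            + 20 * u t x * pdx (pdx (pdt u)) t x
            + 30 * pdx u t x * pdx (pdt u) t x
            + 18 * pdx (pdx u) t x * pdt u t x
            + 64 * (u t x) ^ 2 * pdt u t x)
          / (pdx (pdx (pdx u)) t x + 16 * u t x * pdx u t x)) t x
        + 4 * pdt u t x = 0 := by
  intro t x hQ
  have hfc : ContDiff ℝ ∞ (fun y => ψ t y) :=
    (hψ.of_le (by simp)).comp ((contDiff_const (c := t)).prodMk contDiff_id)
  have hgc : ContDiff ℝ ∞ (fun y => u t y) :=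
    (hu.of_le (by simp)).comp ((contDiff_const (c := t)).prodMk contDiff_id)
  have hHill1 : ∀ y, deriv (deriv (fun z => ψ t z)) y = -(u t y * ψ t y) := by
    intro y
    have h := hHill t y
    unfold pdx at h
    linarith
  have hu_eq : (fun t x => -(pdx (pdx ψ) t x) / ψ t x) = u := by
    funext s y
    have h := hHill s y
    have h2 : pdx (pdx ψ) s y = -(u s y * ψ s y) := by linarith
    rw [h2, neg_neg, mul_div_assoc, div_self (hne s y), mul_one]
  have hutf : pdt u = pdx (fun t x => ψ t x ^ 4) := by
    rw [← hu_eq]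
    funext s y
    exact hflow s y
  rw [hutf]
  have hN : ∀ y : ℝ,
      pdx (pdx (pdx (pdx (pdx (fun t x => ψ t x ^ 4))))) t y
        + 20 * u t y * pdx (pdx (pdx (fun t x => ψ t x ^ 4))) t y
        + 30 * pdx u t y * pdx (pdx (fun t x => ψ t x ^ 4)) t y
        + 18 * pdx (pdx u) t y * pdx (fun t x => ψ t x ^ 4) t y
        + 64 * (u t y) ^ 2 * pdx (fun t x => ψ t x ^ 4) t y
      = -4 * ψ t y ^ 4 * (pdx (pdx (pdx u)) t y + 16 * u t y * pdx u t y) := by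
    intro y
    exact keylem (fun z => ψ t z) (fun z => u t z) hfc hgc hHill1 y
  have hqc : Continuous (fun y => pdx (pdx (pdx u)) t y + 16 * u t y * pdx u t y) := by
    have h1 : ContDiff ℝ ∞ (deriv (fun z => u t z)) := (contDiff_infty_iff_deriv.mp hgc).2
    have h2 : ContDiff ℝ ∞ (deriv (deriv (fun z => u t z))) := (contDiff_infty_iff_deriv.mp h1).2
    have h3 : ContDiff ℝ ∞ (deriv (deriv (deriv (fun z => u t z)))) :=
      (contDiff_infty_iff_deriv.mp h2).2
    exact h3.continuous.add ((continuous_const.mul hgc.continuous).mul h1.continuous)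
  have hev : ∀ᶠ y in nhds x,
      pdx (pdx (pdx u)) t y + 16 * u t y * pdx u t y ≠ 0 :=
    hqc.continuousAt.eventually_ne hQ
  have heq : (fun y =>
      (pdx (pdx (pdx (pdx (pdx (fun t x => ψ t x ^ 4))))) t y
        + 20 * u t y * pdx (pdx (pdx (fun t x => ψ t x ^ 4))) t y
        + 30 * pdx u t y * pdx (pdx (fun t x => ψ t x ^ 4)) t y
        + 18 * pdx (pdx u) t y * pdx (fun t x => ψ t x ^ 4) t y
        + 64 * (u t y) ^ 2 * pdx (fun t x => ψ t x ^ 4) t y)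
      / (pdx (pdx (pdx u)) t y + 16 * u t y * pdx u t y))
      =ᶠ[nhds x] fun y => -4 * ψ t y ^ 4 := by
    filter_upwards [hev] with y hy
    rw [hN y, mul_div_assoc, div_self hy, mul_one]
  have hder := heq.deriv_eq
  have hpow : DifferentiableAt ℝ (fun y => ψ t y ^ 4) x :=
    ((hfc.differentiable (by norm_num)) x).pow 4
  have hrhs : deriv (fun y => -4 * ψ t y ^ 4) x = -4 * deriv (fun y => ψ t y ^ 4) x :=
    deriv_const_mul (-4 : ℝ) hpow
  show deriv (fun y =>
      (pdx (pdx (pdx (pdx (pdx (fun t x => ψ t x ^ 4))))) t y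
        + 20 * u t y * pdx (pdx (pdx (fun t x => ψ t x ^ 4))) t y
        + 30 * pdx u t y * pdx (pdx (fun t x => ψ t x ^ 4)) t y
        + 18 * pdx (pdx u) t y * pdx (fun t x => ψ t x ^ 4) t y
        + 64 * (u t y) ^ 2 * pdx (fun t x => ψ t x ^ 4) t y)
      / (pdx (pdx (pdx u)) t y + 16 * u t y * pdx u t y)) x
      + 4 * deriv (fun y => ψ t y ^ 4) x = 0
  rw [hder, hrhs]
  ring
end

section
/- Let u, f : ℝ → ℝ be smooth functions such that f''' + 4·u·f' + 2·u'·f = 0 holds identically on ℝ. Define, for λ ∈ ℝ, the operator L^λ acting on smooth φ : ℝ → ℝ by (L^λ φ)(x) = f(x)·φ'(x) − λ·f'(x)·φ(x), and the fourth-order operator (Δ⁴φ)(x) = φ''''(x) + 10·u(x)·φ''(x) + 10·u'(x)·φ'(x) + (9·u(x)² + 3·u''(x))·φ(x). Then for every smooth φ : ℝ → ℝ, L^{−5/2}(Δ⁴ φ) = Δ⁴(L^{3/2} φ) on ℝ; i.e., the vector field f·d/dx preserves the fourth-order projective connection. -/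
/-- The Lie derivative of weight `lam` along the vector field `f·d/dx`:
`(L^lam φ)(x) = f(x)·φ'(x) − lam·f'(x)·φ(x)`. -/
noncomputable def LieDerivWt (f : ℝ → ℝ) (lam : ℝ) (φ : ℝ → ℝ) : ℝ → ℝ :=
  fun x => f x * deriv φ x - lam * deriv f x * φ x

/-- The fourth-order projective connection
`Δ⁴ = ∂_x⁴ + 10·u·∂_x² + 10·u'·∂_x + 9·u² + 3·u''`. -/
noncomputable def Delta4 (u : ℝ → ℝ) (φ : ℝ → ℝ) : ℝ → ℝ :=
  fun x => iteratedDeriv 4 φ x + 10 * u x * iteratedDeriv 2 φ x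
    + 10 * deriv u x * deriv φ x + (9 * (u x) ^ 2 + 3 * iteratedDeriv 2 u x) * φ x

private lemma key_aux {g : ℝ → ℝ} (hg : ContDiff ℝ (⊤ : ℕ∞) g) (n : ℕ) (y : ℝ) :
    HasDerivAt (iteratedDeriv n g) (iteratedDeriv (n + 1) g y) y := by
  have hg' : ContDiff ℝ (⊤ : ℕ∞) g := hg.of_le (by simp)
  have h1 := ContDiff.iterate_deriv n hg'
  rw [← iteratedDeriv_eq_iterate] at h1
  have h2 := ((h1.differentiable (by simp)) y).hasDerivAt
  rwa [iteratedDeriv_succ]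

private lemma kd_aux {g : ℝ → ℝ} (hg : ContDiff ℝ (⊤ : ℕ∞) g) (y : ℝ) :
    HasDerivAt g (deriv g y) y :=
  ((hg.differentiable (by simp)) y).hasDerivAt

private lemma keyd_aux {g : ℝ → ℝ} (hg : ContDiff ℝ (⊤ : ℕ∞) g) (y : ℝ) :
    HasDerivAt (deriv g) (iteratedDeriv 2 g y) y := by
  have := key_aux hg 1 y
  rwa [iteratedDeriv_one] at this

/-- if smooth `f` satisfies the projective vector field equation
`f''' + 4·u·f' + 2·u'·f = 0`, then `L^{−5/2}(Δ⁴ φ) = Δ⁴(L^{3/2} φ)` for every smooth `φ`,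
i.e. `f·d/dx` preserves the fourth-order projective connection. -/
theorem stmt_8 (u f : ℝ → ℝ) (hu : ContDiff ℝ (⊤ : ℕ∞) u) (hf : ContDiff ℝ (⊤ : ℕ∞) f)
    (hproj : ∀ x : ℝ,
      iteratedDeriv 3 f x + 4 * u x * deriv f x + 2 * deriv u x * f x = 0) :
    ∀ φ : ℝ → ℝ, ContDiff ℝ (⊤ : ℕ∞) φ → ∀ x : ℝ,
      LieDerivWt f (-(5/2)) (Delta4 u φ) x = Delta4 u (LieDerivWt f (3/2) φ) x := by
  intro φ hφ x
  -- derivative of the projective vector field equation: formula for f⁗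
  have hP : ∀ y : ℝ, HasDerivAt
      (fun y => iteratedDeriv 3 f y + 4 * u y * deriv f y + 2 * deriv u y * f y)
      (iteratedDeriv 4 f y
        + (4 * deriv u y * deriv f y + 4 * u y * iteratedDeriv 2 f y)
        + (2 * iteratedDeriv 2 u y * f y + 2 * deriv u y * deriv f y)) y := by
    intro y
    have h := ((key_aux hf 3 y).add
        (((kd_aux hu y).const_mul 4).mul (keyd_aux hf y))).add
        (((keyd_aux hu y).const_mul 2).mul (kd_aux hf y))
    exact h.congr_deriv (by ring)
  have e4 : ∀ y : ℝ, iteratedDeriv 4 f y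
      + (4 * deriv u y * deriv f y + 4 * u y * iteratedDeriv 2 f y)
      + (2 * iteratedDeriv 2 u y * f y + 2 * deriv u y * deriv f y) = 0 := by
    intro y
    have h := hP y
    rw [show (fun y => iteratedDeriv 3 f y + 4 * u y * deriv f y + 2 * deriv u y * f y)
        = (fun _ : ℝ => (0 : ℝ)) from funext hproj] at h
    have h2 := h.deriv
    simpa using h2.symm
  -- second derivative: formula for f⁽⁵⁾
  have hQ : ∀ y : ℝ, HasDerivAt
      (fun y => iteratedDeriv 4 f y
        + (4 * deriv u y * deriv f y + 4 * u y * iteratedDeriv 2 f y)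
        + (2 * iteratedDeriv 2 u y * f y + 2 * deriv u y * deriv f y))
      (iteratedDeriv 5 f y
        + (4 * iteratedDeriv 2 u y * deriv f y + 4 * deriv u y * iteratedDeriv 2 f y
          + 4 * deriv u y * iteratedDeriv 2 f y + 4 * u y * iteratedDeriv 3 f y)
        + (2 * iteratedDeriv 3 u y * f y + 2 * iteratedDeriv 2 u y * deriv f y
          + 2 * iteratedDeriv 2 u y * deriv f y + 2 * deriv u y * iteratedDeriv 2 f y)) y := by
    intro y
    have h := ((key_aux hf 4 y).add
        ((((keyd_aux hu y).const_mul 4).mul (keyd_aux hf y)).add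
          (((kd_aux hu y).const_mul 4).mul (key_aux hf 2 y)))).add
        ((((key_aux hu 2 y).const_mul 2).mul (kd_aux hf y)).add
          (((keyd_aux hu y).const_mul 2).mul (keyd_aux hf y)))
    exact h.congr_deriv (by ring)
  have e5 : ∀ y : ℝ, iteratedDeriv 5 f y
      + (4 * iteratedDeriv 2 u y * deriv f y + 4 * deriv u y * iteratedDeriv 2 f y
        + 4 * deriv u y * iteratedDeriv 2 f y + 4 * u y * iteratedDeriv 3 f y)
      + (2 * iteratedDeriv 3 u y * f y + 2 * iteratedDeriv 2 u y * deriv f y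
        + 2 * iteratedDeriv 2 u y * deriv f y + 2 * deriv u y * iteratedDeriv 2 f y) = 0 := by
    intro y
    have h := hQ y
    rw [show (fun y => iteratedDeriv 4 f y
        + (4 * deriv u y * deriv f y + 4 * u y * iteratedDeriv 2 f y)
        + (2 * iteratedDeriv 2 u y * f y + 2 * deriv u y * deriv f y))
        = (fun _ : ℝ => (0 : ℝ)) from funext e4] at h
    have h2 := h.deriv
    simpa using h2.symm
  -- solved forms
  have hf3 : iteratedDeriv 3 f x = -(4 * u x * deriv f x) - 2 * deriv u x * f x := by
    have := hproj x; linarith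
  have hf4 : iteratedDeriv 4 f x = -(4 * deriv u x * deriv f x)
      - 4 * u x * iteratedDeriv 2 f x - 2 * iteratedDeriv 2 u x * f x
      - 2 * deriv u x * deriv f x := by
    have := e4 x; linarith
  have hf5 : iteratedDeriv 5 f x = -(8 * iteratedDeriv 2 u x * deriv f x)
      - 10 * deriv u x * iteratedDeriv 2 f x - 4 * u x * iteratedDeriv 3 f x
      - 2 * iteratedDeriv 3 u x * f x := by
    have := e5 x; linarith
  -- first derivative of L^{3/2} φ
  have h1 : ∀ y : ℝ, HasDerivAt (LieDerivWt f (3/2) φ)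
      (f y * iteratedDeriv 2 φ y - 1/2 * deriv f y * deriv φ y
        - 3/2 * iteratedDeriv 2 f y * φ y) y := by
    intro y
    have h := ((kd_aux hf y).mul (keyd_aux hφ y)).sub
      (((keyd_aux hf y).const_mul (3/2)).mul (kd_aux hφ y))
    have h' : HasDerivAt (LieDerivWt f (3/2) φ)
        (deriv f y * deriv φ y + f y * iteratedDeriv 2 φ y
          - (3/2 * iteratedDeriv 2 f y * φ y + 3/2 * deriv f y * deriv φ y)) y := h
    convert h' using 1
    ring
  have hD1 : deriv (LieDerivWt f (3/2) φ)
      = fun y => f y * iteratedDeriv 2 φ y - 1/2 * deriv f y * deriv φ y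
        - 3/2 * iteratedDeriv 2 f y * φ y := funext fun y => (h1 y).deriv
  -- second derivative
  have h2 : ∀ y : ℝ, HasDerivAt
      (fun y => f y * iteratedDeriv 2 φ y - 1/2 * deriv f y * deriv φ y
        - 3/2 * iteratedDeriv 2 f y * φ y)
      (f y * iteratedDeriv 3 φ y + 1/2 * deriv f y * iteratedDeriv 2 φ y
        - 2 * iteratedDeriv 2 f y * deriv φ y - 3/2 * iteratedDeriv 3 f y * φ y) y := by
    intro y
    have h := (((kd_aux hf y).mul (key_aux hφ 2 y)).sub
      (((keyd_aux hf y).const_mul (1/2)).mul (keyd_aux hφ y))).sub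
      (((key_aux hf 2 y).const_mul (3/2)).mul (kd_aux hφ y))
    exact h.congr_deriv (by ring)
  have hD2 : deriv (fun y => f y * iteratedDeriv 2 φ y - 1/2 * deriv f y * deriv φ y
        - 3/2 * iteratedDeriv 2 f y * φ y)
      = fun y => f y * iteratedDeriv 3 φ y + 1/2 * deriv f y * iteratedDeriv 2 φ y
        - 2 * iteratedDeriv 2 f y * deriv φ y - 3/2 * iteratedDeriv 3 f y * φ y :=
    funext fun y => (h2 y).deriv
  -- third derivative
  have h3 : ∀ y : ℝ, HasDerivAt
      (fun y => f y * iteratedDeriv 3 φ y + 1/2 * deriv f y * iteratedDeriv 2 φ y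
        - 2 * iteratedDeriv 2 f y * deriv φ y - 3/2 * iteratedDeriv 3 f y * φ y)
      (f y * iteratedDeriv 4 φ y + 3/2 * deriv f y * iteratedDeriv 3 φ y
        - 3/2 * iteratedDeriv 2 f y * iteratedDeriv 2 φ y
        - 7/2 * iteratedDeriv 3 f y * deriv φ y - 3/2 * iteratedDeriv 4 f y * φ y) y := by
    intro y
    have h := ((((kd_aux hf y).mul (key_aux hφ 3 y)).add
      (((keyd_aux hf y).const_mul (1/2)).mul (key_aux hφ 2 y))).sub
      (((key_aux hf 2 y).const_mul 2).mul (keyd_aux hφ y))).sub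
      (((key_aux hf 3 y).const_mul (3/2)).mul (kd_aux hφ y))
    exact h.congr_deriv (by ring)
  have hD3 : deriv (fun y => f y * iteratedDeriv 3 φ y + 1/2 * deriv f y * iteratedDeriv 2 φ y
        - 2 * iteratedDeriv 2 f y * deriv φ y - 3/2 * iteratedDeriv 3 f y * φ y)
      = fun y => f y * iteratedDeriv 4 φ y + 3/2 * deriv f y * iteratedDeriv 3 φ y
        - 3/2 * iteratedDeriv 2 f y * iteratedDeriv 2 φ y
        - 7/2 * iteratedDeriv 3 f y * deriv φ y - 3/2 * iteratedDeriv 4 f y * φ y :=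
    funext fun y => (h3 y).deriv
  -- fourth derivative
  have h4 : HasDerivAt
      (fun y => f y * iteratedDeriv 4 φ y + 3/2 * deriv f y * iteratedDeriv 3 φ y
        - 3/2 * iteratedDeriv 2 f y * iteratedDeriv 2 φ y
        - 7/2 * iteratedDeriv 3 f y * deriv φ y - 3/2 * iteratedDeriv 4 f y * φ y)
      (f x * iteratedDeriv 5 φ x + 5/2 * deriv f x * iteratedDeriv 4 φ x
        - 5 * iteratedDeriv 3 f x * iteratedDeriv 2 φ x
        - 5 * iteratedDeriv 4 f x * deriv φ x - 3/2 * iteratedDeriv 5 f x * φ x) x := by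
    have h := (((((kd_aux hf x).mul (key_aux hφ 4 x)).add
      (((keyd_aux hf x).const_mul (3/2)).mul (key_aux hφ 3 x))).sub
      (((key_aux hf 2 x).const_mul (3/2)).mul (key_aux hφ 2 x))).sub
      (((key_aux hf 3 x).const_mul (7/2)).mul (keyd_aux hφ x))).sub
      (((key_aux hf 4 x).const_mul (3/2)).mul (kd_aux hφ x))
    exact h.congr_deriv (by ring)
  -- derivative of Δ⁴ φ
  have hDel : HasDerivAt (Delta4 u φ)
      (iteratedDeriv 5 φ x
        + (10 * deriv u x * iteratedDeriv 2 φ x + 10 * u x * iteratedDeriv 3 φ x)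
        + (10 * iteratedDeriv 2 u x * deriv φ x + 10 * deriv u x * iteratedDeriv 2 φ x)
        + ((9 * (2 * u x ^ 1 * deriv u x) + 3 * iteratedDeriv 3 u x) * φ x
          + (9 * u x ^ 2 + 3 * iteratedDeriv 2 u x) * deriv φ x)) x := by
    have h := (((key_aux hφ 4 x).add
      (((kd_aux hu x).const_mul 10).mul (key_aux hφ 2 x))).add
      (((keyd_aux hu x).const_mul 10).mul (keyd_aux hφ x))).add
      (((((kd_aux hu x).pow 2).const_mul 9).add ((key_aux hu 2 x).const_mul 3)).mul
        (kd_aux hφ x))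
    have h' : HasDerivAt (Delta4 u φ)
        (iteratedDeriv 5 φ x
          + (10 * deriv u x * iteratedDeriv 2 φ x + 10 * u x * iteratedDeriv 3 φ x)
          + (10 * iteratedDeriv 2 u x * deriv φ x + 10 * deriv u x * iteratedDeriv 2 φ x)
          + ((9 * (2 * u x ^ 1 * deriv u x) + 3 * iteratedDeriv 3 u x) * φ x
            + (9 * u x ^ 2 + 3 * iteratedDeriv 2 u x) * deriv φ x)) x := by
      exact h.congr_deriv (by simp only [Pi.add_apply, Pi.pow_apply]; ring)
    exact h'
  -- now compute both sides
  simp only [LieDerivWt, Delta4]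
  rw [hDel.deriv]
  have hit2 : iteratedDeriv 2 (LieDerivWt f (3/2) φ) x
      = f x * iteratedDeriv 3 φ x + 1/2 * deriv f x * iteratedDeriv 2 φ x
        - 2 * iteratedDeriv 2 f x * deriv φ x - 3/2 * iteratedDeriv 3 f x * φ x := by
    rw [iteratedDeriv_succ (n := 1) (f := LieDerivWt f (3/2) φ), iteratedDeriv_one, hD1, hD2]
  have hit4 : iteratedDeriv 4 (LieDerivWt f (3/2) φ) x
      = f x * iteratedDeriv 5 φ x + 5/2 * deriv f x * iteratedDeriv 4 φ x
        - 5 * iteratedDeriv 3 f x * iteratedDeriv 2 φ x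
        - 5 * iteratedDeriv 4 f x * deriv φ x - 3/2 * iteratedDeriv 5 f x * φ x := by
    rw [iteratedDeriv_succ (n := 3) (f := LieDerivWt f (3/2) φ), iteratedDeriv_succ (n := 2) (f := LieDerivWt f (3/2) φ),
      iteratedDeriv_succ (n := 1) (f := LieDerivWt f (3/2) φ), iteratedDeriv_one, hD1, hD2, hD3, h4.deriv]
  have hd1 : deriv (LieDerivWt f (3/2) φ) x
      = f x * iteratedDeriv 2 φ x - 1/2 * deriv f x * deriv φ x
        - 3/2 * iteratedDeriv 2 f x * φ x := by
    rw [hD1]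
  rw [hit4, hit2, hd1, hf5, hf4, hf3]
  ring
end

section
/- Let A > 0, set p = −9·A³/10, and define ψ : ℝ × ℝ → ℝ by ψ(t,x) = A·(sech(x − p·t))^{2/3} (real power of the positive number sech(x − p·t)). Then ψ satisfies the flow equation ∂_t(−ψ_{xx}/ψ) = ∂_x(ψ³) at every point (t,x) ∈ ℝ²; equivalently, ∂_x(ψ³) + ∂_t(ψ_{xx}/ψ) = 0. Hence this equation admits the solitonic solution A·sech^{2/3}(x − p·t) with speed of propagation p = −9·A³/10. -/
open Real

section TravelingWave

variable (f : ℝ → ℝ) (p : ℝ)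

theorem pdx_travelingWave : pdx (fun t x => f (x - p * t)) = fun t x => deriv f (x - p * t) := by
  ext t x
  exact deriv_comp_sub_const ..

theorem pdt_travelingWave (t x : ℝ) :
    pdt (fun t x => f (x - p * t)) t x = -p * deriv f (x - p * t) := by
  have h := deriv_comp_mul_left p (fun s => f (x - s)) t
  rw [deriv_comp_const_sub, smul_eq_mul] at h
  rw [pdt, h]
  ring

theorem pdt_neg_pdx_pdx_div_travelingWave (t x : ℝ) :
    pdt (fun t x => -(pdx (pdx fun t x => f (x - p * t)) t x) / f (x - p * t)) t x
      = -p * deriv (fun ξ => -deriv (deriv f) ξ / f ξ) (x - p * t) := by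
  rw [pdx_travelingWave, pdx_travelingWave]
  exact pdt_travelingWave (fun ξ => -deriv (deriv f) ξ / f ξ) p t x

end TravelingWave

theorem hasDerivAt_cosh_rpow (r ξ : ℝ) :
    HasDerivAt (fun ξ => cosh ξ ^ r) (r * sinh ξ * cosh ξ ^ (r - 1)) ξ := by
  convert (hasDerivAt_cosh ξ).rpow_const (p := r) (Or.inl (cosh_pos ξ).ne') using 1
  ring

theorem deriv_deriv_cosh_rpow (r ξ : ℝ) :
    deriv (deriv fun ξ => cosh ξ ^ r) ξ = (r ^ 2 - r * (r - 1) / cosh ξ ^ 2) * cosh ξ ^ r := by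
  have hderiv : deriv (fun ξ => cosh ξ ^ r) = fun ξ => r * sinh ξ * cosh ξ ^ (r - 1) :=
    funext fun ξ => (hasDerivAt_cosh_rpow r ξ).deriv
  have hderiv2 : HasDerivAt (fun ξ => r * sinh ξ * cosh ξ ^ (r - 1))
      (r * cosh ξ * cosh ξ ^ (r - 1) + r * sinh ξ * ((r - 1) * sinh ξ * cosh ξ ^ (r - 1 - 1))) ξ :=
    ((hasDerivAt_sinh ξ).const_mul r).mul (hasDerivAt_cosh_rpow (r - 1) ξ)
  have hcosh := cosh_pos ξ
  rw [hderiv, hderiv2.deriv, rpow_sub hcosh, rpow_sub hcosh, rpow_sub hcosh, rpow_one]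
  field_simp
  linear_combination r * (r - 1) * sinh_sq ξ

theorem one_div_cosh_rpow (r ξ : ℝ) : (1 / cosh ξ) ^ r = cosh ξ ^ (-r) := by
  rw [one_div, inv_rpow (cosh_pos ξ).le, rpow_neg (cosh_pos ξ).le]

theorem cosh_rpow_neg_two_thirds_pow_three (ξ : ℝ) :
    (cosh ξ ^ (-(2 / 3 : ℝ))) ^ 3 = (cosh ξ ^ 2)⁻¹ := by
  rw [← rpow_natCast, ← rpow_mul (cosh_pos ξ).le]
  norm_num

theorem differentiable_inv_cosh_sq : Differentiable ℝ fun ξ => (cosh ξ ^ 2)⁻¹ :=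
  (differentiable_cosh.pow 2).inv fun ξ => pow_ne_zero 2 (cosh_pos ξ).ne'

noncomputable def solitonProfile (A ξ : ℝ) : ℝ := A * (1 / cosh ξ) ^ ((2 : ℝ) / 3)

theorem solitonProfile_eq (A : ℝ) : solitonProfile A = fun ξ => A * cosh ξ ^ (-(2 / 3 : ℝ)) := by
  ext ξ
  rw [solitonProfile, one_div_cosh_rpow]

theorem neg_deriv_deriv_div_solitonProfile {A : ℝ} (hA : A ≠ 0) :
    (fun ξ => -deriv (deriv (solitonProfile A)) ξ / solitonProfile A ξ)
      = fun ξ => -(4 / 9) + 10 / 9 * (cosh ξ ^ 2)⁻¹ := by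
  ext ξ
  rw [solitonProfile_eq, deriv_const_mul_field', deriv_const_mul_field']
  beta_reduce
  rw [deriv_deriv_cosh_rpow]
  have := (rpow_pos_of_pos (cosh_pos ξ) (-(2 / 3 : ℝ))).ne'
  field_simp
  ring

theorem solitonProfile_pow_three (A : ℝ) :
    (fun ξ => solitonProfile A ξ ^ 3) = fun ξ => A ^ 3 * (cosh ξ ^ 2)⁻¹ := by
  simp only [solitonProfile_eq, mul_pow, cosh_rpow_neg_two_thirds_pow_three]

/-- for `A > 0`, `p = −9·A³/10`, the function
`ψ(t,x) = A·(sech(x − p·t))^(2/3)` solves the flow equation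
`∂_t(−ψ_{xx}/ψ) = ∂_x(ψ³)` everywhere; it is a solitonic solution with speed `p`. -/
theorem stmt_9 (A p : ℝ) (hA : 0 < A) (hp : p = -9 * A ^ 3 / 10)
    (ψ : ℝ → ℝ → ℝ)
    (hψ : ψ = fun t x => A * (1 / Real.cosh (x - p * t)) ^ ((2 : ℝ) / 3)) :
    ∀ t x : ℝ,
      pdt (fun t x => -(pdx (pdx ψ) t x) / ψ t x) t x
        = pdx (fun t x => (ψ t x) ^ 3) t x := by
  intro t x
  obtain rfl : ψ = fun t x => solitonProfile A (x - p * t) := hψ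
  rw [pdt_neg_pdx_pdx_div_travelingWave, pdx_travelingWave (fun ξ => solitonProfile A ξ ^ 3),
    neg_deriv_deriv_div_solitonProfile hA.ne', solitonProfile_pow_three]
  beta_reduce
  rw [deriv_const_add', deriv_const_mul _ (differentiable_inv_cosh_sq _),
    deriv_const_mul _ (differentiable_inv_cosh_sq _), hp]
  ring
end
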